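/- Let r ≥ 1 be a natural number and let β : ℂ → ℂ be defined by β(s) = ∏_{i=0}^{2r-2} Λ(2s - i) / Λ(2s + 2r - 1 - 2i), where Λ is the completed Riemann zeta function. Then the function s ↦ β(s) / (s + 1/2) tends to -2·Λ(2r) as s tends to -1/2 within ℂ \ {-1/2}; in other words, β has a zero of order exactly one at s = -1/2 with first Taylor coefficient β_{2r,1}(-1/2) = -2·Λ(2r). -/

import Mathlib

/-!
Near `s = -1/2` only the factor `i = r - 1` of `β` degenerates: its denominator `Λ(2s + 1)` has a
simple pole, and since `Λ` has residue `-1` at `0`, `(s + 1/2) Λ(2s + 1) → -1/2`. Every other factor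
is continuous there with a nonzero denominator, so the limit is a ratio of values of `Λ` at
integers. By `Λ(1 - s) = Λ(s)` the numerators `Λ(-1 - i)` become `Λ(2), …, Λ(2r)` and the
denominators `Λ(2(r - 1 - i))`, `i ≠ r - 1`, become `Λ(2), …, Λ(2r - 1)`, leaving `Λ(2r)`.
-/

open Complex Filter Topology Finset

theorem prod_range_two_mul {M : Type*} [CommMonoid M] (f : ℕ → M) (n : ℕ) :
    ∏ i ∈ range (2 * n), f i = ∏ j ∈ range n, f (2 * j) * f (2 * j + 1) := by
  induction n with
  | zero => simp
  | succ n ih =>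
    rw [show 2 * (n + 1) = 2 * n + 1 + 1 by ring, prod_range_succ, prod_range_succ, ih,
      prod_range_succ, mul_assoc]

theorem prod_range_two_mul_add_one_erase {M : Type*} [CommMonoid M] (f : ℕ → M) (n : ℕ) :
    ∏ i ∈ (range (2 * n + 1)).erase n, f i =
      (∏ i ∈ range n, f i) * ∏ k ∈ range n, f (n + 1 + k) := by
  have hsplit : (range (2 * n + 1)).erase n = range n ∪ Ico (n + 1) (2 * n + 1) := by
    ext i
    simp only [mem_erase, mem_range, mem_union, mem_Ico]
    omega
  have hdisj : Disjoint (range n) (Ico (n + 1) (2 * n + 1)) :=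
    disjoint_left.2 fun i hi hi' => by simp only [mem_range, mem_Ico] at hi hi'; omega
  rw [hsplit, prod_union hdisj, prod_Ico_eq_prod_range, show 2 * n + 1 - (n + 1) = n by omega]

theorem completedRiemannZeta_ne_zero_of_one_lt_re {s : ℂ} (hs : 1 < s.re) :
    completedRiemannZeta s ≠ 0 := by
  have h := riemannZeta_ne_zero_of_one_lt_re hs
  rw [riemannZeta_def_of_ne_zero (ne_zero_of_one_lt_re hs)] at h
  exact (div_ne_zero_iff.1 h).1

theorem completedRiemannZeta_intCast_ne_zero {m : ℤ} (h0 : m ≠ 0) (h1 : m ≠ 1) :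
    completedRiemannZeta m ≠ 0 := by
  rcases lt_or_gt_of_ne h0 with hm | hm
  · rw [← completedRiemannZeta_one_sub]
    apply completedRiemannZeta_ne_zero_of_one_lt_re
    have hm' : (m : ℝ) < 0 := by exact_mod_cast hm
    simp only [sub_re, one_re, intCast_re]
    linarith
  · apply completedRiemannZeta_ne_zero_of_one_lt_re
    simp only [intCast_re]
    exact_mod_cast (by omega : 1 < m)

theorem Filter.Tendsto.completedRiemannZeta {α : Type*} {l : Filter α} {f : α → ℂ} {a : ℂ}
    (hf : Tendsto f l (𝓝 a)) (h0 : a ≠ 0) (h1 : a ≠ 1) :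
    Tendsto (fun x => completedRiemannZeta (f x)) l (𝓝 (completedRiemannZeta a)) :=
  (differentiableAt_completedZeta h0 h1).continuousAt.tendsto.comp hf

theorem completedRiemannZeta_residue_zero :
    Tendsto (fun s => s * completedRiemannZeta s) (𝓝[≠] 0) (𝓝 (-1)) := by
  have hreflect : Tendsto (fun s : ℂ => 1 - s) (𝓝[≠] 0) (𝓝[≠] 1) := by
    simpa using ((hasDerivAt_id (0 : ℂ)).const_sub 1).tendsto_nhdsNE (by norm_num)
  refine (completedRiemannZeta_residue_one.comp hreflect).neg.congr fun s => ?_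
  simp [completedRiemannZeta_one_sub]

theorem tendsto_add_half_mul_completedRiemannZeta_two_mul_add_one :
    Tendsto (fun s : ℂ => (s + 1 / 2) * completedRiemannZeta (2 * s + 1))
      (𝓝[≠] (-(1 / 2))) (𝓝 (-(1 / 2))) := by
  have haffine : Tendsto (fun s : ℂ => 2 * s + 1) (𝓝[≠] (-(1 / 2))) (𝓝[≠] 0) := by
    simpa using (((hasDerivAt_id (-(1 / 2) : ℂ)).const_mul 2).add_const 1).tendsto_nhdsNE
      (by norm_num)
  convert (completedRiemannZeta_residue_zero.comp haffine).const_mul (1 / 2) using 2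
  · simp only [Function.comp_apply]
    ring
  · norm_num

theorem prod_completedRiemannZeta_neg_one_sub (N : ℕ) :
    ∏ i ∈ range N, completedRiemannZeta (-1 - i) =
      ∏ i ∈ range N, completedRiemannZeta (i + 2) :=
  prod_congr rfl fun i _ => by rw [← completedRiemannZeta_one_sub]; ring_nf

theorem prod_erase_completedRiemannZeta_two_mul_sub (n : ℕ) :
    ∏ i ∈ (range (2 * n + 1)).erase n, completedRiemannZeta (2 * n - 2 * i) =
      ∏ k ∈ range (2 * n), completedRiemannZeta (k + 2) := by
  rw [prod_range_two_mul_add_one_erase, prod_range_two_mul, ← prod_range_reflect _ n,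
    ← prod_mul_distrib]
  refine prod_congr rfl fun k hk => ?_
  obtain ⟨j, rfl⟩ := Nat.exists_eq_add_of_lt (mem_range.1 hk)
  rw [show k + j + 1 - 1 - k = j by omega]
  congr 1
  · congr 1
    push_cast
    ring
  · rw [← completedRiemannZeta_one_sub]
    congr 1
    push_cast
    ring

theorem completedRiemannZeta_neg_one_sub_mul_prod_erase (n : ℕ) :
    completedRiemannZeta (-1 - n) * ∏ i ∈ (range (2 * n + 1)).erase n,
      completedRiemannZeta (-1 - i) / completedRiemannZeta (2 * n - 2 * i) =
      completedRiemannZeta (2 * n + 2) := by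
  have hmem : n ∈ range (2 * n + 1) := mem_range.2 (by omega)
  have hden : ∏ k ∈ range (2 * n), completedRiemannZeta (k + 2) ≠ 0 :=
    prod_ne_zero_iff.2 fun k _ => by
      simpa using completedRiemannZeta_intCast_ne_zero (m := k + 2) (by omega) (by omega)
  rw [prod_div_distrib, ← mul_div_assoc,
    mul_prod_erase _ (fun i : ℕ => completedRiemannZeta (-1 - i)) hmem,
    prod_completedRiemannZeta_neg_one_sub, prod_erase_completedRiemannZeta_two_mul_sub,
    prod_range_succ, mul_div_cancel_left₀ _ hden, Nat.cast_mul, Nat.cast_ofNat]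

theorem tendsto_completedRiemannZeta_div_add_half_mul (n : ℕ) :
    Tendsto (fun s : ℂ => completedRiemannZeta (2 * s - n) /
      ((s + 1 / 2) * completedRiemannZeta (2 * s + 1))) (𝓝[≠] (-(1 / 2)))
      (𝓝 (-2 * completedRiemannZeta (-1 - n))) := by
  rw [show -2 * completedRiemannZeta (-1 - n) = completedRiemannZeta (-1 - n) / (-(1 / 2)) by
    ring]
  refine Tendsto.div ?_ tendsto_add_half_mul_completedRiemannZeta_two_mul_add_one (by norm_num)
  refine Tendsto.completedRiemannZeta ?_ (by exact_mod_cast (by omega : (-1 - n : ℤ) ≠ 0))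
    (by exact_mod_cast (by omega : (-1 - n : ℤ) ≠ 1))
  exact ((by fun_prop : Continuous fun s : ℂ => 2 * s - n).tendsto' _ _ (by ring)).mono_left
    nhdsWithin_le_nhds

theorem tendsto_completedRiemannZeta_div_of_ne {r i : ℕ} (hi : i + 1 ≠ r) :
    Tendsto (fun s : ℂ => completedRiemannZeta (2 * s - i) /
      completedRiemannZeta (2 * s + 2 * r - 1 - 2 * i)) (𝓝 (-(1 / 2)))
      (𝓝 (completedRiemannZeta (-1 - i) / completedRiemannZeta (2 * r - 2 - 2 * i))) := by
  have hden : completedRiemannZeta (2 * r - 2 - 2 * i) ≠ 0 := by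
    simpa using completedRiemannZeta_intCast_ne_zero (m := 2 * r - 2 - 2 * i) (by omega)
      (by omega)
  refine Tendsto.div ?_ ?_ hden
  · refine Tendsto.completedRiemannZeta ?_ (by exact_mod_cast (by omega : (-1 - i : ℤ) ≠ 0))
      (by exact_mod_cast (by omega : (-1 - i : ℤ) ≠ 1))
    exact (by fun_prop : Continuous fun s : ℂ => 2 * s - i).tendsto' _ _ (by ring)
  · refine Tendsto.completedRiemannZeta ?_
      (by exact_mod_cast (by omega : (2 * r - 2 - 2 * i : ℤ) ≠ 0))
      (by exact_mod_cast (by omega : (2 * r - 2 - 2 * i : ℤ) ≠ 1))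
    exact (by fun_prop : Continuous fun s : ℂ => 2 * s + 2 * r - 1 - 2 * i).tendsto' _ _
      (by ring)

/-- The factor `β(s) = ∏_{i=0}^{2r-2} Λ(2s-i)/Λ(2s+2r-1-2i)` in the functional equation
of the spherical Siegel Eisenstein series on `O(2r,2r)` has a zero of order exactly one
at `s = -1/2`, with first Taylor coefficient `β_{2r,1}(-1/2) = -2·Λ(2r)`. -/
theorem beta_simple_zero_at_neg_half (r : ℕ) (hr : 1 ≤ r) (β : ℂ → ℂ)
    (hβ : ∀ s : ℂ, β s = ∏ i ∈ Finset.range (2 * r - 1),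
      completedRiemannZeta (2 * s - (i : ℂ)) /
        completedRiemannZeta (2 * s + 2 * (r : ℂ) - 1 - 2 * (i : ℂ))) :
    Tendsto (fun s : ℂ => β s / (s + 1 / 2))
      (nhdsWithin (-(1 / 2)) {(-(1 / 2) : ℂ)}ᶜ)
      (nhds (-2 * completedRiemannZeta (2 * (r : ℂ)))) := by
  obtain ⟨n, rfl⟩ := Nat.exists_eq_add_of_le' hr
  set factor : ℕ → ℂ → ℂ := fun i s => completedRiemannZeta (2 * s - i) /
    completedRiemannZeta (2 * s + 2 * ((n + 1 : ℕ) : ℂ) - 1 - 2 * i)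
  have hmem : n ∈ range (2 * n + 1) := mem_range.2 (by omega)
  have hsplit : ∀ s : ℂ, β s / (s + 1 / 2) =
      completedRiemannZeta (2 * s - n) / ((s + 1 / 2) * completedRiemannZeta (2 * s + 1)) *
        ∏ i ∈ (range (2 * n + 1)).erase n, factor i s := by
    intro s
    rw [hβ, show 2 * (n + 1) - 1 = 2 * n + 1 by omega, ← mul_prod_erase _ _ hmem,
      show 2 * s + 2 * ((n + 1 : ℕ) : ℂ) - 1 - 2 * n = 2 * s + 1 by push_cast; ring,
      mul_comm (s + 1 / 2), ← div_div]
    ring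
  have hrest := tendsto_finsetProd ((range (2 * n + 1)).erase n) fun i hi =>
    tendsto_completedRiemannZeta_div_of_ne (r := n + 1) (i := i)
      (by simp only [mem_erase] at hi; omega)
  have hvalue : -2 * completedRiemannZeta (-1 - n) * ∏ i ∈ (range (2 * n + 1)).erase n,
      completedRiemannZeta (-1 - i) / completedRiemannZeta (2 * ((n + 1 : ℕ) : ℂ) - 2 - 2 * i) =
      -2 * completedRiemannZeta (2 * ((n + 1 : ℕ) : ℂ)) := by
    push_cast
    rw [mul_assoc, show 2 * ((n : ℂ) + 1) = 2 * n + 2 by ring,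
      ← completedRiemannZeta_neg_one_sub_mul_prod_erase]
    congr 3 with i
    ring_nf
  rw [← hvalue]
  exact ((tendsto_completedRiemannZeta_div_add_half_mul n).mul
    (hrest.mono_left nhdsWithin_le_nhds)).congr fun s => (hsplit s).symm
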